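/- arXiv:1306.2622 — 3 statements merged into one kernel-verified Lean document; each statement's English description precedes it below -/
import Mathlib

section
/- Let G, H and K be finite groups and let L ≤ G×H and M ≤ H×K be subgroups. Writing p₂(L) ≤ H for the image of L under the second projection and p₁(M) ≤ H for the image of M under the first projection, and choosing a set T of representatives of the double cosets p₂(L)\H/p₁(M), there is an isomorphism of left (G×K)-sets ((G×H)/L) ×_H ((H×K)/M) ≅ ⨆_{h ∈ T} (G×K)/(L * ((h,1)M(h,1)⁻¹)), where for subgroups A ≤ G×H and B ≤ H×K one sets A * B := {(g,k) ∈ G×K : ∃ h ∈ H with (g,h) ∈ A and (h,k) ∈ B}. -/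
open MulAction

/-- An isomorphism of `M`-sets: an equivariant bijection. -/
def IsoAsGSets (M X Y : Type*) [SMul M X] [SMul M Y] : Prop :=
  ∃ e : X ≃ Y, ∀ (m : M) (x : X), e (m • x) = m • e x

/-- The twisted diagonal subgroup `Δ(R,α,S) = {(α s, s) | s ∈ S}` of `G × H`,
for an isomorphism `α : S ≃* R`. -/
def twistedDiagonal {G H : Type*} [Group G] [Group H] (R : Subgroup G) (S : Subgroup H)
    (α : S ≃* R) : Subgroup (G × H) :=
  ((R.subtype.comp α.toMonoidHom).prod S.subtype).range

/-- `Δ(G,φ,H) = {(φ h, h) | h ∈ H} ≤ G × H` for an isomorphism `φ : H ≃* G`. -/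
def fullTwistedDiagonal {G H : Type*} [Group G] [Group H] (φ : H ≃* G) : Subgroup (G × H) :=
  (φ.toMonoidHom.prod (MonoidHom.id H)).range

/-- The diagonal subgroup `Δ(R) = {(r,r) | r ∈ R} ≤ G × G`. -/
def diagSubgroup {G : Type*} [Group G] (R : Subgroup G) : Subgroup (G × G) :=
  (R.subtype.prod R.subtype).range

/-- A `(G,H)`-biset (i.e. a left `(G × H)`-set) is bifree if it is free as a left `G`-set
and free as a right `H`-set. -/
def IsBifree (G H X : Type*) [Group G] [Group H] [MulAction (G × H) X] : Prop :=
  (∀ (g : G) (x : X), (g, (1 : H)) • x = x → g = 1) ∧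
  (∀ (h : H) (x : X), ((1 : G), h) • x = x → h = 1)

section Tensor

variable (G H K : Type*) [Group G] [Group H] [Group K]
variable (X Y : Type*) [MulAction (G × H) X] [MulAction (H × K) Y]

/-- The relation on `X × Y` identifying `(x·h, y)` with `(x, h·y)`. -/
def bisetSetoid : Setoid (X × Y) where
  r p q := ∃ h : H, q.1 = ((1 : G), h) • p.1 ∧ q.2 = (h, (1 : K)) • p.2
  iseqv := by
    constructor
    · intro p
      exact ⟨1, by simp [Prod.mk_one_one], by simp [Prod.mk_one_one]⟩
    · rintro p q ⟨h, h1, h2⟩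
      exact ⟨h⁻¹, by simp [h1, smul_smul, Prod.mk_one_one], by simp [h2, smul_smul, Prod.mk_one_one]⟩
    · rintro p q r ⟨h, h1, h2⟩ ⟨h', h1', h2'⟩
      exact ⟨h' * h, by simp [h1, h1', smul_smul], by simp [h2, h2', smul_smul]⟩

/-- The tensor product `X ×_H Y` of a `(G,H)`-biset and an `(H,K)`-biset;
a `(G,K)`-biset. -/
def BisetTensor : Type _ :=
  Quotient (bisetSetoid G H K X Y)

variable {G H K X Y}

/-- The class of `(x, y)` in `X ×_H Y`. -/
def BisetTensor.mk (p : X × Y) : BisetTensor G H K X Y :=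
  Quotient.mk (bisetSetoid G H K X Y) p

variable (G H K X Y)

instance : SMul (G × K) (BisetTensor G H K X Y) :=
  ⟨fun a => Quotient.map (fun p => ((a.1, (1 : H)) • p.1, ((1 : H), a.2) • p.2))
    (by
      rintro p q ⟨h, h1, h2⟩
      exact ⟨h, by simp [h1, smul_smul], by simp [h2, smul_smul]⟩)⟩

variable {G H K X Y}

theorem BisetTensor.smul_mk (a : G × K) (p : X × Y) :
    a • (BisetTensor.mk p : BisetTensor G H K X Y) =
      BisetTensor.mk ((a.1, (1 : H)) • p.1, ((1 : H), a.2) • p.2) :=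
  rfl

variable (G H K X Y)

instance : MulAction (G × K) (BisetTensor G H K X Y) where
  one_smul q := Quotient.inductionOn q fun p => by
    refine Quotient.sound ⟨1, ?_, ?_⟩ <;> simp [Prod.mk_one_one]
  mul_smul a b q := Quotient.inductionOn q fun p => by
    refine Quotient.sound ⟨1, ?_, ?_⟩ <;> simp [smul_smul, Prod.mk_one_one]

end Tensor

section Op

/-- The opposite biset: a `(G,H)`-biset viewed as an `(H,G)`-biset via
`h · x · g := g⁻¹ · x · h⁻¹`. -/
def BisetOp (H G X : Type*) : Type _ := (fun _ _ => X) H G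

instance BisetOp.instMulAction {G H : Type*} [Group G] [Group H] (X : Type*)
    [MulAction (G × H) X] : MulAction (H × G) (BisetOp H G X) :=
  MulAction.compHom X (MulEquiv.prodComm : H × G ≃* G × H).toMonoidHom

instance BisetOp.instFinite {G H : Type*} (X : Type*) [Finite X] : Finite (BisetOp H G X) :=
  inferInstanceAs (Finite X)

end Op

section Grp

/-- The group `G` viewed as a `(G,G)`-biset via left and right multiplication. -/
structure BisetGrp (G : Type*) where
  /-- the underlying group element -/
  val : G

instance BisetGrp.instSMul {G : Type*} [Group G] : SMul (G × G) (BisetGrp G) :=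
  ⟨fun p x => ⟨p.1 * x.val * p.2⁻¹⟩⟩

theorem BisetGrp.smul_def {G : Type*} [Group G] (p : G × G) (x : BisetGrp G) :
    p • x = ⟨p.1 * x.val * p.2⁻¹⟩ := rfl

instance BisetGrp.instMulAction {G : Type*} [Group G] : MulAction (G × G) (BisetGrp G) where
  one_smul x := by
    cases x
    simp [BisetGrp.smul_def]
  mul_smul p q x := by
    cases x
    simp [BisetGrp.smul_def, mul_assoc]

instance BisetGrp.instFinite {G : Type*} [Finite G] : Finite (BisetGrp G) :=
  Finite.of_equiv G ⟨fun g => ⟨g⟩, fun x => x.val, fun _ => rfl, fun _ => rfl⟩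

end Grp

/-- A pair `(X,Y)` of `(G,H)`-bisets is an orthogonal pair if
`(X ×_H X°) ⊔ (Y ×_H Y°) ≅ G ⊔ (X ×_H Y°) ⊔ (Y ×_H X°)` as `(G,G)`-bisets;
this encodes the equation `([X] - [Y]) ·_H ([X] - [Y])° = [G]` in `B^Δ(G,G)`. -/
def IsOrthogonalPair (G H : Type*) [Group G] [Group H] (X Y : Type*)
    [MulAction (G × H) X] [MulAction (G × H) Y] : Prop :=
  IsoAsGSets (G × G)
    (BisetTensor G H G X (BisetOp H G X) ⊕ BisetTensor G H G Y (BisetOp H G Y))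
    (BisetGrp G ⊕ (BisetTensor G H G X (BisetOp H G Y) ⊕ BisetTensor G H G Y (BisetOp H G X)))

section Iota

/-- For a `G`-set `Z`, the `(G,G)`-biset `ι(Z) = G × Z` with action
`(g₁,g₂) • (g,z) = (g₁ g g₂⁻¹, g₂ • z)`. -/
structure IotaBiset (G Z : Type*) where
  /-- the group component -/
  fst : G
  /-- the `G`-set component -/
  snd : Z

instance IotaBiset.instSMul {G Z : Type*} [Group G] [MulAction G Z] :
    SMul (G × G) (IotaBiset G Z) :=
  ⟨fun p x => ⟨p.1 * x.fst * p.2⁻¹, p.2 • x.snd⟩⟩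

theorem IotaBiset.smul_def {G Z : Type*} [Group G] [MulAction G Z] (p : G × G)
    (x : IotaBiset G Z) : p • x = ⟨p.1 * x.fst * p.2⁻¹, p.2 • x.snd⟩ := rfl

instance IotaBiset.instMulAction {G Z : Type*} [Group G] [MulAction G Z] :
    MulAction (G × G) (IotaBiset G Z) where
  one_smul x := by
    cases x
    simp [IotaBiset.smul_def]
  mul_smul p q x := by
    cases x
    simp [IotaBiset.smul_def, mul_assoc, mul_smul]

instance IotaBiset.instFinite {G Z : Type*} [Finite G] [Finite Z] : Finite (IotaBiset G Z) :=
  Finite.of_equiv (G × Z) ⟨fun p => ⟨p.1, p.2⟩, fun x => (x.fst, x.snd), fun _ => rfl,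
    fun _ => rfl⟩

end Iota

/-- The composition (as relations) `L * M ≤ G × K` of `L ≤ G × H` and `M ≤ H × K`. -/
def starComp {G H K : Type*} [Group G] [Group H] [Group K] (L : Subgroup (G × H))
    (M : Subgroup (H × K)) : Subgroup (G × K) where
  carrier := {p | ∃ h : H, (p.1, h) ∈ L ∧ (h, p.2) ∈ M}
  one_mem' := ⟨1, L.one_mem, M.one_mem⟩
  mul_mem' := by
    rintro a b ⟨h, h1, h2⟩ ⟨h', h1', h2'⟩
    exact ⟨h * h', L.mul_mem h1 h1', M.mul_mem h2 h2'⟩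
  inv_mem' := by
    rintro a ⟨h, h1, h2⟩
    exact ⟨h⁻¹, L.inv_mem h1, M.inv_mem h2⟩
/-!
Decompose `(G × H)/L ×_H (H × K)/M` into `G × K`-orbits. Every element is
`(g, h)L ×_H (h', k)M`; writing `h⁻¹ h' = x t y` with `x ∈ p₂(L)`, `y ∈ p₁(M)`, `t ∈ T` and
absorbing `x` into `L` and `y` into `M` shows that it lies in the orbit of
`x_t = L ×_H (t, 1)M`. Conversely, if `x_t` and `x_t'` lie in one orbit then `t` and `t'` lie
in one double coset, so `t = t'`. The stabilizer of `x_t` is `L * (t, 1)M(t, 1)⁻¹`, and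
orbit–stabilizer finishes the proof.
-/
theorem isoAsGSets_of_bijective {M X Y : Type*} [SMul M X] [SMul M Y] (f : Y → X)
    (hf : Function.Bijective f) (hsmul : ∀ (m : M) (y : Y), f (m • y) = m • f y) :
    IsoAsGSets M X Y := by
  let e := Equiv.ofBijective f hf
  refine ⟨e.symm, fun m x => e.injective ?_⟩
  simp [e, hsmul, Equiv.ofBijective_apply_symm_apply]

theorem isoAsGSets_sigma_quotient_of_orbit_transversal {α X ι : Type*} [Group α]
    [MulAction α X] (x : ι → X) (N : ι → Subgroup α) (hstab : ∀ i, stabilizer α (x i) = N i)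
    (hcover : ∀ y, ∃ i, y ∈ orbit α (x i)) (hdisj : ∀ i j, x i ∈ orbit α (x j) → i = j) :
    IsoAsGSets α X (Σ i, α ⧸ N i) := by
  obtain rfl : N = fun i => stabilizer α (x i) := funext fun i => (hstab i).symm
  refine isoAsGSets_of_bijective (fun s => ofQuotientStabilizer α (x s.1) s.2) ⟨?_, ?_⟩
    fun a ⟨i, q⟩ => ofQuotientStabilizer_smul α (x i) a q
  · rintro ⟨i, q⟩ ⟨j, q'⟩ h
    obtain ⟨a, rfl⟩ := QuotientGroup.mk_surjective q
    obtain ⟨b, rfl⟩ := QuotientGroup.mk_surjective q'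
    change a • x i = b • x j at h
    obtain rfl : i = j := hdisj i j ⟨a⁻¹ * b, by
      change (a⁻¹ * b) • x j = x i
      rw [mul_smul, inv_smul_eq_iff, h]⟩
    exact congrArg (Sigma.mk i) (injective_ofQuotientStabilizer α (x i) h)
  · intro y
    obtain ⟨i, a, rfl⟩ := hcover y
    exact ⟨⟨i, a⟩, rfl⟩

section Biset

variable {G H K : Type*} [Group G] [Group H] [Group K]

theorem BisetTensor.mk_eq_mk_iff {X Y : Type*} [MulAction (G × H) X] [MulAction (H × K) Y]
    (x x' : X) (y y' : Y) :
    (BisetTensor.mk (x, y) : BisetTensor G H K X Y) = BisetTensor.mk (x', y') ↔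
      ∃ h : H, x' = ((1 : G), h) • x ∧ y' = (h, (1 : K)) • y :=
  Quotient.eq

theorem BisetTensor.mk_surjective {X Y : Type*} [MulAction (G × H) X] [MulAction (H × K) Y] :
    Function.Surjective (BisetTensor.mk : X × Y → BisetTensor G H K X Y) :=
  Quotient.mk_surjective

variable (L : Subgroup (G × H)) (M : Subgroup (H × K))

theorem BisetTensor.mk_quotient_eq_mk_quotient_iff (a a' : G × H) (b b' : H × K) :
    (BisetTensor.mk ((a : (G × H) ⧸ L), (b : (H × K) ⧸ M)) : BisetTensor G H K _ _) =
        BisetTensor.mk ((a' : (G × H) ⧸ L), (b' : (H × K) ⧸ M)) ↔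
      ∃ h : H, a'⁻¹ * (((1 : G), h) * a) ∈ L ∧ b'⁻¹ * ((h, (1 : K)) * b) ∈ M := by
  simp only [BisetTensor.mk_eq_mk_iff, MulAction.Quotient.smul_coe, smul_eq_mul,
    QuotientGroup.eq]

theorem mem_starComp_map_conj_iff (t : H) (p : G × K) :
    p ∈ starComp L (M.map (MulAut.conj (t, (1 : K))).toMonoidHom) ↔
      ∃ h : H, (p.1, h) ∈ L ∧ (t⁻¹ * h * t, p.2) ∈ M := by
  simp only [starComp, Subgroup.mem_mk, Subgroup.mem_map_equiv, MulAut.conj_symm_apply]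
  exact exists_congr fun h => and_congr_right fun _ => by simp

def tensorBasePoint (t : H) : BisetTensor G H K ((G × H) ⧸ L) ((H × K) ⧸ M) :=
  BisetTensor.mk (((1 : G × H) : (G × H) ⧸ L), (((t, 1) : H × K) : (H × K) ⧸ M))

theorem smul_tensorBasePoint (t : H) (p : G × K) :
    p • tensorBasePoint L M t =
      BisetTensor.mk ((((p.1, 1) : G × H) : (G × H) ⧸ L),
        (((t, p.2) : H × K) : (H × K) ⧸ M)) := by
  simp [tensorBasePoint, BisetTensor.smul_mk]

theorem smul_tensorBasePoint_eq_iff (t t' : H) (p p' : G × K) :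
    p • tensorBasePoint L M t = p' • tensorBasePoint L M t' ↔
      ∃ h : H, (p'.1⁻¹ * p.1, h) ∈ L ∧ (t'⁻¹ * h * t, p'.2⁻¹ * p.2) ∈ M := by
  simp [smul_tensorBasePoint, BisetTensor.mk_quotient_eq_mk_quotient_iff, mul_assoc]

theorem stabilizer_tensorBasePoint (t : H) :
    stabilizer (G × K) (tensorBasePoint L M t) =
      starComp L (M.map (MulAut.conj (t, (1 : K))).toMonoidHom) := by
  ext p
  rw [mem_stabilizer_iff, mem_starComp_map_conj_iff]
  simpa using smul_tensorBasePoint_eq_iff L M t t p 1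

theorem mk_mem_orbit_tensorBasePoint (a : G × H) (b : H × K) (t : H) {x y : H}
    (hx : x ∈ L.map (MonoidHom.snd G H)) (hy : y ∈ M.map (MonoidHom.fst H K))
    (hab : a.2⁻¹ * b.1 = x * t * y) :
    BisetTensor.mk ((a : (G × H) ⧸ L), (b : (H × K) ⧸ M)) ∈
      orbit (G × K) (tensorBasePoint L M t) := by
  obtain ⟨u, hu : u ∈ L, rfl⟩ := hx
  obtain ⟨v, hv : v ∈ M, rfl⟩ := hy
  refine ⟨(a.1 * u.1, b.2 * v.2⁻¹), ?_⟩
  change _ • _ = _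
  rw [smul_tensorBasePoint, BisetTensor.mk_quotient_eq_mk_quotient_iff]
  refine ⟨a.2 * u.2, ?_, ?_⟩
  · convert hu using 1
    ext <;> simp
  · convert M.inv_mem hv using 1
    have hv1 : v.1 = t⁻¹ * u.2⁻¹ * (a.2⁻¹ * b.1) := by simp [hab, mul_assoc]
    ext <;> simp [hv1, mul_assoc]

theorem exists_eq_mul_mul_of_tensorBasePoint_mem_orbit (t t' : H)
    (h : tensorBasePoint L M t ∈ orbit (G × K) (tensorBasePoint L M t')) :
    ∃ x ∈ L.map (MonoidHom.snd G H), ∃ y ∈ M.map (MonoidHom.fst H K), t' = x * t * y := by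
  obtain ⟨p, hp⟩ := h
  rw [← one_smul (G × K) (tensorBasePoint L M t)] at hp
  obtain ⟨η, hL, hM⟩ := (smul_tensorBasePoint_eq_iff L M t' t p 1).mp hp
  exact ⟨η⁻¹, inv_mem ⟨_, hL, rfl⟩, _, ⟨_, hM, rfl⟩, by simp [mul_assoc]⟩

end Biset

theorem statement3_general {G H K : Type*} [Group G] [Group H] [Group K]
    (L : Subgroup (G × H)) (M : Subgroup (H × K)) (T : Finset H)
    (hT : ∀ h : H, ∃! t, t ∈ T ∧ ∃ x ∈ Subgroup.map (MonoidHom.snd G H) L,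
        ∃ y ∈ Subgroup.map (MonoidHom.fst H K) M, h = x * t * y) :
    IsoAsGSets (G × K)
      (BisetTensor G H K ((G × H) ⧸ L) ((H × K) ⧸ M))
      (Σ t : T, ((G × K) ⧸ starComp L
        (Subgroup.map (MulAut.conj ((t : H), (1 : K))).toMonoidHom M))) := by
  refine isoAsGSets_sigma_quotient_of_orbit_transversal (fun t : T => tensorBasePoint L M t) _
    (fun t => stabilizer_tensorBasePoint L M t) ?_ ?_
  · intro z
    obtain ⟨⟨x, y⟩, rfl⟩ := BisetTensor.mk_surjective z
    obtain ⟨a, rfl⟩ := QuotientGroup.mk_surjective x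
    obtain ⟨b, rfl⟩ := QuotientGroup.mk_surjective y
    obtain ⟨t, ⟨htT, u, hu, v, hv, hab⟩, -⟩ := hT (a.2⁻¹ * b.1)
    exact ⟨⟨t, htT⟩, mk_mem_orbit_tensorBasePoint L M a b t hu hv hab⟩
  · intro t t' htt'
    obtain ⟨u, hu, v, hv, ht'⟩ := exists_eq_mul_mul_of_tensorBasePoint_mem_orbit L M t t' htt'
    exact Subtype.ext <| (hT t').unique ⟨t.2, u, hu, v, hv, ht'⟩
      ⟨t'.2, 1, one_mem _, 1, one_mem _, by simp⟩

/-- the Mackey-type decomposition formula for the tensor product of two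
transitive bisets `(G×H)/L` and `(H×K)/M`, indexed by a set `T` of representatives of the
double cosets `p₂(L)\H/p₁(M)`. -/
theorem statement3 {G H K : Type*} [Group G] [Group H] [Group K] [Finite G] [Finite H]
    [Finite K] (L : Subgroup (G × H)) (M : Subgroup (H × K)) (T : Finset H)
    (hT : ∀ h : H, ∃! t, t ∈ T ∧ ∃ x ∈ Subgroup.map (MonoidHom.snd G H) L,
        ∃ y ∈ Subgroup.map (MonoidHom.fst H K) M, h = x * t * y) :
    IsoAsGSets (G × K)
      (BisetTensor G H K ((G × H) ⧸ L) ((H × K) ⧸ M))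
      (Σ t : T, ((G × K) ⧸ starComp L
        (Subgroup.map (MulAut.conj ((t : H), (1 : K))).toMonoidHom M))) :=
  statement3_general L M T hT
end

section
/- Let G, H and K be finite groups, let R ≤ G and T ≤ K be subgroups, and let ρ : T → R be a group isomorphism. Let Γ_H(R,ρ,T) be the set of triples (σ,S,τ) with S ≤ H a subgroup and σ : S → R, τ : T → S group isomorphisms such that ρ = σ∘τ; H acts on Γ_H(R,ρ,T) by h·(σ,S,τ) = (σ∘c_{h⁻¹}, hSh⁻¹, c_h∘τ), and let Γ̃_H(R,ρ,T) be a set of representatives of the H-orbits. Then for any finite bifree (G,H)-biset X and any finite bifree (H,K)-biset Y one has the equality of rational numbers |(X ×_H Y)^{Δ(R,ρ,T)}| = Σ_{(σ,S,τ) ∈ Γ̃_H(R,ρ,T)} |C_H(S)|⁻¹ · |X^{Δ(R,σ,S)}| · |Y^{Δ(S,τ,T)}|. -/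
open MulAction

/-- A triple `(σ, S, τ)` with `S ≤ H` and isomorphisms `σ : S ≃* R`, `τ : T ≃* S`
such that `ρ = σ ∘ τ`; an element of the set `Γ_H(R,ρ,T)`. -/
structure TripleGamma {G K : Type*} [Group G] [Group K] (H : Type*) [Group H]
    (R : Subgroup G) (T : Subgroup K) (ρ : T ≃* R) where
  /-- the middle subgroup -/
  S : Subgroup H
  /-- the isomorphism `σ : S ≃* R` -/
  σ : S ≃* R
  /-- the isomorphism `τ : T ≃* S` -/
  τ : T ≃* S
  comp : ∀ t : T, σ (τ t) = ρ t

/-- Two triples lie in the same `H`-orbit (under `h·(σ,S,τ) = (σ∘c_{h⁻¹}, hSh⁻¹, c_h∘τ)`)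
if and only if they are related as follows. -/
def TripleGamma.HConj {G K : Type*} [Group G] [Group K] {H : Type*} [Group H]
    {R : Subgroup G} {T : Subgroup K} {ρ : T ≃* R}
    (t₁ t₂ : TripleGamma H R T ρ) : Prop :=
  ∃ h : H, t₂.S = Subgroup.map (MulAut.conj h).toMonoidHom t₁.S ∧
    ∀ k : T, (t₂.τ k : H) = h * (t₁.τ k : H) * h⁻¹

/-!
Count the incidence set `P` of triples `((σ,S,τ), x, y)` with `(σ,S,τ) ∈ Γ_H(R,ρ,T)`,
`x ∈ X^{Δ(R,σ,S)}` and `y ∈ Y^{Δ(S,τ,T)}` in two ways. The map `((σ,S,τ), x, y) ↦ x ×_H y`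
lands in `(X ×_H Y)^{Δ(R,ρ,T)}`, it is onto because `Y` is bifree, and its fibres are the orbits
of the action `h · ((σ,S,τ), x, y) = (h · (σ,S,τ), x h⁻¹, h y)`, which is free because `X` is
right free. Hence `|P| = |H| · |(X ×_H Y)^{Δ(R,ρ,T)}|`. On the other hand `|P|` is the sum over
`Γ_H(R,ρ,T)` of `|X^{Δ(R,σ,S)}| · |Y^{Δ(S,τ,T)}|`, which is constant on `H`-orbits, and the
stabiliser of `(σ,S,τ)` is `C_H(S)`, so each orbit contributes `|H| / |C_H(S)|` copies.
-/

theorem MulAction.card_eq_card_mul_card_of_free {H P Z : Type*} [Group H] [MulAction H P]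
    (π : P → Z) (hπ : Function.Surjective π) (hfiber : ∀ p q, π p = π q ↔ q ∈ orbit H p)
    (hfree : ∀ (h : H) (p : P), h • p = p → h = 1) :
    Nat.card P = Nat.card Z * Nat.card H := by
  choose sec hsec using hπ
  have π_smul : ∀ (h : H) p, π (h • p) = π p := fun h p => ((hfiber p _).2 ⟨h, rfl⟩).symm
  rw [← Nat.card_prod]
  refine (Nat.card_eq_of_bijective (fun zh : Z × H => zh.2 • sec zh.1) ⟨?_, fun p => ?_⟩).symm
  · rintro ⟨z, h⟩ ⟨z', h'⟩ he
    obtain rfl : z = z' := by simpa only [π_smul, hsec] using congrArg π he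
    have : (h'⁻¹ * h) • sec z = sec z := by rw [mul_smul]; exact inv_smul_eq_iff.2 he
    rw [inv_mul_eq_one.1 (hfree _ _ this)]
  · obtain ⟨h, hh⟩ := (hfiber (sec (π p)) p).1 (hsec _)
    exact ⟨(π p, h), hh⟩

theorem MulAction.sum_eq_card_mul_finsum_transversal {H Ω : Type*} [Group H] [Finite H]
    [MulAction H Ω] [Fintype Ω] (Γ : Set Ω) (hΓ : ∀ t : Ω, ∃! t', t' ∈ Γ ∧ t' ∈ orbit H t)
    (f : Ω → ℚ) (hf : ∀ (h : H) (t : Ω), f (h • t) = f t) :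
    ∑ t, f t = Nat.card H * ∑ᶠ t ∈ Γ, (Nat.card (stabilizer H t) : ℚ)⁻¹ * f t := by
  classical
  choose θ hθ hθ_unique using hΓ
  have fiber_eq_orbit : ∀ t' ∈ Γ, ∀ t, θ t = t' ↔ t ∈ orbit H t' := fun t' ht' t =>
    ⟨fun h => h ▸ mem_orbit_symm.1 (hθ t).2,
      fun h => (hθ_unique t t' ⟨ht', mem_orbit_symm.1 h⟩).symm⟩
  have sum_fiber : ∀ t' ∈ Γ, ∑ t with θ t = t', f t = Nat.card (orbit H t') * f t' := by
    intro t' ht'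
    have card_fiber : (Finset.univ.filter (θ · = t')).card = Nat.card (orbit H t') := by
      rw [← Fintype.card_subtype, ← Nat.card_eq_fintype_card]
      exact Nat.card_congr (Equiv.subtypeEquivRight (fiber_eq_orbit t' ht'))
    rw [← card_fiber, ← nsmul_eq_mul, ← Finset.sum_const]
    refine Finset.sum_congr rfl fun t ht => ?_
    obtain ⟨h, rfl⟩ := (fiber_eq_orbit t' ht' t).1 (Finset.mem_filter.1 ht).2
    exact hf h t'
  rw [finsum_mem_eq_toFinset_sum, Finset.mul_sum,
    ← Finset.sum_fiberwise_of_maps_to (g := θ) (t := Γ.toFinset) fun t _ => by simp [hθ t]]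
  refine Finset.sum_congr rfl fun t' ht' => ?_
  rw [Set.mem_toFinset] at ht'
  have orbit_stabilizer := (stabilizer H t').index_mul_card
  rw [index_stabilizer, ← Nat.card_coe_set_eq] at orbit_stabilizer
  have hpos : (Nat.card (stabilizer H t') : ℚ) ≠ 0 := by exact_mod_cast Nat.card_pos.ne'
  rw [sum_fiber t' ht', ← orbit_stabilizer]
  push_cast
  field_simp

theorem smul_smul_eq_smul_iff_of_mul_eq {M α : Type*} [Group M] [MulAction M α] {a b c : M}
    (habc : a * c = c * b) (x : α) : a • c • x = c • x ↔ b • x = x := by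
  rw [smul_smul, habc, mul_smul, smul_left_cancel_iff]

section Bisets

variable {G H K : Type*} [Group G] [Group H] [Group K]
variable {X Y : Type*} [MulAction (G × H) X] [MulAction (H × K) Y]

theorem mem_fixedPoints_twistedDiagonal_iff {R : Subgroup G} {S : Subgroup H} (α : S ≃* R)
    (x : X) :
    x ∈ fixedPoints (twistedDiagonal R S α) X ↔ ∀ s : S, ((α s : G), (s : H)) • x = x :=
  ⟨fun hx s => hx ⟨_, s, rfl⟩, by rintro hx ⟨_, s, rfl⟩; exact hx s⟩

theorem IsBifree.fst_eq_of_smul_eq_self (hX : IsBifree G H X) {x : X} {g g' : G} {h : H}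
    (hg : (g, h) • x = x) (hg' : (g', h) • x = x) : g = g' := by
  have : (g'⁻¹ * g, (1 : H)) • x = x := by
    conv_lhs => rw [show (g'⁻¹ * g, (1 : H)) = (g', h)⁻¹ * (g, h) by simp, mul_smul, hg]
    exact inv_smul_eq_iff.2 hg'.symm
  exact (inv_mul_eq_one.1 (hX.1 _ _ this)).symm

theorem BisetTensor.mk_eq_mk_iff_s5 {p q : X × Y} :
    (BisetTensor.mk p : BisetTensor G H K X Y) = BisetTensor.mk q ↔
      ∃ h : H, q.1 = ((1 : G), h) • p.1 ∧ q.2 = (h, (1 : K)) • p.2 :=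
  Quotient.eq

theorem BisetTensor.mk_mem_fixedPoints_twistedDiagonal_iff {R : Subgroup G} {T : Subgroup K}
    (ρ : T ≃* R) (x : X) (y : Y) :
    BisetTensor.mk (x, y) ∈ fixedPoints (twistedDiagonal R T ρ) (BisetTensor G H K X Y) ↔
      ∀ k : T, ∃ h : H, ((ρ k : G), h) • x = x ∧ (h, (k : K)) • y = y := by
  refine (mem_fixedPoints_twistedDiagonal_iff ρ _).trans (forall_congr' fun k => ?_)
  simp only [BisetTensor.smul_mk, BisetTensor.mk_eq_mk_iff_s5, smul_smul, Prod.mk_mul_mk, mul_one,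
    one_mul, eq_comm (a := x), eq_comm (a := y)]

end Bisets

namespace TripleGamma

variable {G H K : Type*} [Group G] [Group H] [Group K]
variable {R : Subgroup G} {T : Subgroup K} {ρ : T ≃* R}

theorem mem_S_iff (t : TripleGamma H R T ρ) (s : H) : s ∈ t.S ↔ ∃ k : T, (t.τ k : H) = s :=
  ⟨fun hs => ⟨t.τ.symm ⟨s, hs⟩, by simp⟩, by rintro ⟨k, rfl⟩; exact (t.τ k).2⟩

theorem ext_of_τ {t₁ t₂ : TripleGamma H R T ρ} (hτ : ∀ k : T, (t₁.τ k : H) = t₂.τ k) :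
    t₁ = t₂ := by
  have hS : t₁.S = t₂.S := by
    ext s
    simp only [mem_S_iff, hτ]
  obtain ⟨S₁, σ₁, τ₁, comp₁⟩ := t₁
  obtain ⟨S₂, σ₂, τ₂, comp₂⟩ := t₂
  dsimp only at hS hτ
  subst hS
  obtain rfl : τ₁ = τ₂ := MulEquiv.ext fun k => Subtype.ext (hτ k)
  obtain rfl : σ₁ = σ₂ := MulEquiv.ext fun s => by
    obtain ⟨k, rfl⟩ := τ₁.surjective s
    rw [comp₁, comp₂]
  rfl

instance : SMul H (TripleGamma H R T ρ) where
  smul h t :=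
    { S := t.S.map (MulAut.conj h : H ≃* H)
      σ := ((MulAut.conj h).subgroupMap t.S).symm.trans t.σ
      τ := t.τ.trans ((MulAut.conj h).subgroupMap t.S)
      comp := fun k => by
        rw [MulEquiv.trans_apply, MulEquiv.trans_apply, MulEquiv.symm_apply_apply, t.comp] }

theorem smul_τ_coe (h : H) (t : TripleGamma H R T ρ) (k : T) :
    ((h • t).τ k : H) = h * t.τ k * h⁻¹ :=
  rfl

instance : MulAction H (TripleGamma H R T ρ) where
  one_smul t := ext_of_τ fun k => by simp [smul_τ_coe]
  mul_smul a b t := ext_of_τ fun k => by simp only [smul_τ_coe]; group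

theorem hConj_iff_mem_orbit (t₁ t₂ : TripleGamma H R T ρ) :
    t₁.HConj t₂ ↔ t₂ ∈ orbit H t₁ :=
  ⟨fun ⟨h, _, hτ⟩ => ⟨h, ext_of_τ fun k => (hτ k).symm⟩,
    fun ⟨h, hh⟩ => hh ▸ ⟨h, rfl, fun _ => rfl⟩⟩

theorem stabilizer_eq_centralizer (t : TripleGamma H R T ρ) :
    stabilizer H t = Subgroup.centralizer (t.S : Set H) := by
  ext h
  simp only [mem_stabilizer_iff, Subgroup.mem_centralizer_iff, SetLike.mem_coe, mem_S_iff,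
    forall_exists_index, forall_apply_eq_imp_iff]
  constructor
  · intro hh k
    rw [eq_comm, ← mul_inv_eq_iff_eq_mul, ← smul_τ_coe, hh]
  · intro hh
    refine ext_of_τ fun k => ?_
    rw [smul_τ_coe, mul_inv_eq_iff_eq_mul, hh]

instance [Finite H] : Finite (TripleGamma H R T ρ) := by
  rcases isEmpty_or_nonempty (TripleGamma H R T ρ) with _ | ⟨⟨t₀⟩⟩
  · infer_instance
  have : Finite T := Finite.of_injective _ (Subtype.val_injective.comp t₀.τ.injective)
  exact Finite.of_injective (fun t : TripleGamma H R T ρ => fun k => (t.τ k : H))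
    fun _ _ he => ext_of_τ (congrFun he)

variable {X Y : Type*} [MulAction (G × H) X] [MulAction (H × K) Y]

theorem mem_fixedPoints_left_iff (t : TripleGamma H R T ρ) (x : X) :
    x ∈ fixedPoints (twistedDiagonal R t.S t.σ) X ↔
      ∀ k : T, ((ρ k : G), (t.τ k : H)) • x = x := by
  rw [mem_fixedPoints_twistedDiagonal_iff, t.τ.surjective.forall]
  simp only [t.comp]

theorem mem_fixedPoints_right_iff (t : TripleGamma H R T ρ) (y : Y) :
    y ∈ fixedPoints (twistedDiagonal t.S T t.τ) Y ↔
      ∀ k : T, ((t.τ k : H), (k : K)) • y = y :=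
  mem_fixedPoints_twistedDiagonal_iff t.τ y

theorem smul_mem_fixedPoints_left_iff (h : H) (t : TripleGamma H R T ρ) (x : X) :
    ((1 : G), h) • x ∈ fixedPoints (twistedDiagonal R (h • t).S (h • t).σ) X ↔
      x ∈ fixedPoints (twistedDiagonal R t.S t.σ) X := by
  simp only [mem_fixedPoints_left_iff]
  exact forall_congr' fun k => smul_smul_eq_smul_iff_of_mul_eq (by simp [smul_τ_coe]) x

theorem smul_mem_fixedPoints_right_iff (h : H) (t : TripleGamma H R T ρ) (y : Y) :
    (h, (1 : K)) • y ∈ fixedPoints (twistedDiagonal (h • t).S T (h • t).τ) Y ↔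
      y ∈ fixedPoints (twistedDiagonal t.S T t.τ) Y := by
  simp only [mem_fixedPoints_right_iff]
  exact forall_congr' fun k => smul_smul_eq_smul_iff_of_mul_eq (by simp [smul_τ_coe]) y

theorem card_fixedPoints_left_smul (h : H) (t : TripleGamma H R T ρ) :
    Nat.card (fixedPoints (twistedDiagonal R (h • t).S (h • t).σ) X) =
      Nat.card (fixedPoints (twistedDiagonal R t.S t.σ) X) :=
  Nat.card_congr <| ((MulAction.toPerm ((1 : G), h)).subtypeEquiv fun x =>
    (smul_mem_fixedPoints_left_iff h t x).symm).symm

theorem card_fixedPoints_right_smul (h : H) (t : TripleGamma H R T ρ) :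
    Nat.card (fixedPoints (twistedDiagonal (h • t).S T (h • t).τ) Y) =
      Nat.card (fixedPoints (twistedDiagonal t.S T t.τ) Y) :=
  Nat.card_congr <| ((MulAction.toPerm (h, (1 : K))).subtypeEquiv fun y =>
    (smul_mem_fixedPoints_right_iff h t y).symm).symm

noncomputable def ofInjective (φ : T →* H) (hφ : Function.Injective φ) : TripleGamma H R T ρ where
  S := φ.range
  σ := (MonoidHom.ofInjective hφ).symm.trans ρ
  τ := MonoidHom.ofInjective hφ
  comp k := by simp

theorem ofInjective_τ_coe (φ : T →* H) (hφ : Function.Injective φ) (k : T) :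
    ((ofInjective φ hφ : TripleGamma H R T ρ).τ k : H) = φ k :=
  MonoidHom.ofInjective_apply hφ

variable (H ρ X Y) in
def Incidence : Type _ :=
  {p : TripleGamma H R T ρ × X × Y //
    p.2.1 ∈ fixedPoints (twistedDiagonal R p.1.S p.1.σ) X ∧
      p.2.2 ∈ fixedPoints (twistedDiagonal p.1.S T p.1.τ) Y}

instance : SMul H (Incidence H ρ X Y) where
  smul h p := ⟨(h • p.1.1, ((1 : G), h) • p.1.2.1, (h, (1 : K)) • p.1.2.2),
    (smul_mem_fixedPoints_left_iff h _ _).2 p.2.1, (smul_mem_fixedPoints_right_iff h _ _).2 p.2.2⟩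

theorem Incidence.smul_val (h : H) (p : Incidence H ρ X Y) :
    (h • p).1 = (h • p.1.1, ((1 : G), h) • p.1.2.1, (h, (1 : K)) • p.1.2.2) :=
  rfl

instance : MulAction H (Incidence H ρ X Y) where
  one_smul p := Subtype.ext <| by simp [Incidence.smul_val, Prod.mk_one_one]
  mul_smul a b p := Subtype.ext <| by
    simp only [Incidence.smul_val, mul_smul, Prod.mk.injEq, true_and]
    constructor <;> rw [smul_smul] <;> simp

namespace Incidence

def toTensor (p : Incidence H ρ X Y) :
    fixedPoints (twistedDiagonal R T ρ) (BisetTensor G H K X Y) :=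
  ⟨BisetTensor.mk (p.1.2.1, p.1.2.2),
    (BisetTensor.mk_mem_fixedPoints_twistedDiagonal_iff ρ _ _).2 fun k =>
      ⟨p.1.1.τ k, (mem_fixedPoints_left_iff _ _).1 p.2.1 k,
        (mem_fixedPoints_right_iff _ _).1 p.2.2 k⟩⟩

/-- If `x ×_H y` is fixed by `Δ(R,ρ,T)`, then for each `k ∈ T` the element `φ k ∈ H` with
`(ρ k, φ k) • x = x` and `(φ k, k) • y = y` is unique because `Y` is left free; hence `φ` is a
homomorphism, injective because `Y` is right free, and `(ρ ∘ φ⁻¹, φ(T), φ)` is the triple sought. -/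
theorem toTensor_surjective (hY : IsBifree H K Y) :
    Function.Surjective (toTensor : Incidence H ρ X Y → _) := by
  rintro ⟨z, hz⟩
  obtain ⟨⟨x, y⟩, rfl⟩ := Quotient.exists_rep z
  choose φ hφx hφy using (BisetTensor.mk_mem_fixedPoints_twistedDiagonal_iff ρ x y).1 hz
  have φ_mul : ∀ k k' : T, φ (k * k') = φ k * φ k' := fun k k' =>
    hY.fst_eq_of_smul_eq_self (hφy (k * k')) <| by
      rw [show (φ k * φ k', ((k * k' : T) : K)) = (φ k, (k : K)) * (φ k', (k' : K)) from rfl,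
        mul_smul, hφy, hφy]
  let φ' : T →* H := MonoidHom.mk' φ φ_mul
  have φ'_injective : Function.Injective φ' :=
    (injective_iff_map_eq_one φ').2 fun k (hk : φ k = 1) =>
      Subtype.ext <| hY.2 k y <| by simpa only [hk] using hφy k
  refine ⟨⟨(ofInjective φ' φ'_injective, x, y), ?_, ?_⟩, rfl⟩
  · exact (mem_fixedPoints_left_iff _ _).2 fun k => by rw [ofInjective_τ_coe]; exact hφx k
  · exact (mem_fixedPoints_right_iff _ _).2 fun k => by rw [ofInjective_τ_coe]; exact hφy k

theorem toTensor_eq_toTensor_iff (hY : IsBifree H K Y) (p q : Incidence H ρ X Y) :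
    toTensor p = toTensor q ↔ q ∈ orbit H p := by
  refine ⟨fun hpq => ?_, ?_⟩
  · obtain ⟨h, hx, hy⟩ := BisetTensor.mk_eq_mk_iff_s5.1 (Subtype.ext_iff.1 hpq)
    refine ⟨h, Subtype.ext (Prod.ext ?_ (Prod.ext hx.symm hy.symm))⟩
    refine ext_of_τ fun k =>
      hY.fst_eq_of_smul_eq_self ?_ ((mem_fixedPoints_right_iff _ _).1 q.2.2 k)
    rw [hy]
    exact (mem_fixedPoints_right_iff _ _).1 ((smul_mem_fixedPoints_right_iff h _ _).2 p.2.2) k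
  · rintro ⟨h, rfl⟩
    exact Subtype.ext (Quotient.sound ⟨h, rfl, rfl⟩)

theorem eq_one_of_smul_eq_self (hX : IsBifree G H X) (h : H) (p : Incidence H ρ X Y)
    (hp : h • p = p) : h = 1 :=
  hX.2 h p.1.2.1 (congrArg (fun p : Incidence H ρ X Y => p.1.2.1) hp)

theorem card_eq_card_fixedPoints_mul_card (hX : IsBifree G H X) (hY : IsBifree H K Y) :
    Nat.card (Incidence H ρ X Y) =
      Nat.card (fixedPoints (twistedDiagonal R T ρ) (BisetTensor G H K X Y)) * Nat.card H :=
  card_eq_card_mul_card_of_free toTensor (toTensor_surjective hY) (toTensor_eq_toTensor_iff hY)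
    (eq_one_of_smul_eq_self hX)

theorem card_eq_sum [Fintype (TripleGamma H R T ρ)] [Finite X] [Finite Y] :
    Nat.card (Incidence H ρ X Y) = ∑ t : TripleGamma H R T ρ,
      Nat.card (fixedPoints (twistedDiagonal R t.S t.σ) X) *
        Nat.card (fixedPoints (twistedDiagonal t.S T t.τ) Y) := by
  simp only [← Nat.card_prod]
  rw [← Nat.card_sigma]
  exact Nat.card_congr
    { toFun := fun p => ⟨p.1.1, ⟨p.1.2.1, p.2.1⟩, ⟨p.1.2.2, p.2.2⟩⟩
      invFun := fun q => ⟨(q.1, q.2.1, q.2.2), q.2.1.2, q.2.2.2⟩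
      left_inv := fun _ => rfl
      right_inv := fun _ => rfl }

end Incidence

end TripleGamma

theorem statement5_general {G H K : Type*} [Group G] [Group H] [Group K] [Finite H]
    (R : Subgroup G) (T : Subgroup K) (ρ : T ≃* R)
    (Γt : Set (TripleGamma H R T ρ))
    (hΓ : ∀ t : TripleGamma H R T ρ, ∃! t', t' ∈ Γt ∧ TripleGamma.HConj t t')
    (X Y : Type*) [MulAction (G × H) X] [MulAction (H × K) Y] [Finite X] [Finite Y]
    (hX : IsBifree G H X) (hY : IsBifree H K Y) :
    (Nat.card (MulAction.fixedPoints (twistedDiagonal R T ρ) (BisetTensor G H K X Y)) : ℚ) =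
      ∑ᶠ t ∈ Γt, (Nat.card (Subgroup.centralizer (t.S : Set H)) : ℚ)⁻¹ *
        (Nat.card (MulAction.fixedPoints (twistedDiagonal R t.S t.σ) X) : ℚ) *
        (Nat.card (MulAction.fixedPoints (twistedDiagonal t.S T t.τ) Y) : ℚ) := by
  let := Fintype.ofFinite (TripleGamma H R T ρ)
  have double_count :=
    (TripleGamma.Incidence.card_eq_card_fixedPoints_mul_card (ρ := ρ) hX hY).symm.trans
      TripleGamma.Incidence.card_eq_sum
  have orbit_sum := sum_eq_card_mul_finsum_transversal Γt
    (fun t => by simpa only [TripleGamma.hConj_iff_mem_orbit] using hΓ t)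
    (fun t => (Nat.card (fixedPoints (twistedDiagonal R t.S t.σ) X) *
      Nat.card (fixedPoints (twistedDiagonal t.S T t.τ) Y) : ℚ))
    fun h t => by
      simp only [TripleGamma.card_fixedPoints_left_smul, TripleGamma.card_fixedPoints_right_smul]
  simp only [TripleGamma.stabilizer_eq_centralizer, ← mul_assoc] at orbit_sum
  refine mul_left_cancel₀ (Nat.cast_ne_zero.2 Nat.card_pos.ne' : (Nat.card H : ℚ) ≠ 0) ?_
  rw [mul_comm, ← orbit_sum]
  exact_mod_cast double_count

/-- the fixed-point (mark) formula for the tensor product of bifree bisets: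
`|(X ×_H Y)^{Δ(R,ρ,T)}| = Σ_{(σ,S,τ) ∈ Γ̃_H(R,ρ,T)} |C_H(S)|⁻¹·|X^{Δ(R,σ,S)}|·|Y^{Δ(S,τ,T)}|`,
where `Γ̃_H(R,ρ,T)` is a set of representatives of the `H`-orbits of `Γ_H(R,ρ,T)`. -/
theorem statement5 {G H K : Type*} [Group G] [Group H] [Group K] [Finite G] [Finite H]
    [Finite K] (R : Subgroup G) (T : Subgroup K) (ρ : T ≃* R)
    (Γt : Set (TripleGamma H R T ρ))
    (hΓ : ∀ t : TripleGamma H R T ρ, ∃! t', t' ∈ Γt ∧ TripleGamma.HConj t t')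
    (X Y : Type*) [MulAction (G × H) X] [MulAction (H × K) Y] [Finite X] [Finite Y]
    (hX : IsBifree G H X) (hY : IsBifree H K Y) :
    (Nat.card (MulAction.fixedPoints (twistedDiagonal R T ρ) (BisetTensor G H K X Y)) : ℚ) =
      ∑ᶠ t ∈ Γt, (Nat.card (Subgroup.centralizer (t.S : Set H)) : ℚ)⁻¹ *
        (Nat.card (MulAction.fixedPoints (twistedDiagonal R t.S t.σ) X) : ℚ) *
        (Nat.card (MulAction.fixedPoints (twistedDiagonal t.S T t.τ) Y) : ℚ) :=
  statement5_general R T ρ Γt hΓ X Y hX hY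
end

section
/- Let G and H be finite groups and let (X,Y) be an orthogonal pair of finite bifree (G,H)-bisets. Then for each subgroup R ≤ G there exists a twisted diagonal subgroup Δ(R,α,S) ≤ G×H (with S ≤ H and α : S → R an isomorphism) such that |X^{Δ(R,α,S)}| ≠ |Y^{Δ(R,α,S)}|; any two such twisted diagonal subgroups with first component R are conjugate by an element of {1}×H; and for any such subgroup one has | |X^{Δ(R,α,S)}| − |Y^{Δ(R,α,S)}| | = |C_G(R)| = |C_H(S)| and N_{α⁻¹} = N_G(R), where N_{α⁻¹} := {g ∈ N_G(R) : ∃ h ∈ N_H(S) with α∘c_h = c_g∘α on S}. -/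
open MulAction

/-- `N_{α⁻¹} = {g ∈ N_G(R) : ∃ h ∈ N_H(S), α ∘ c_h = c_g ∘ α on S}`. -/
def NsetAlphaInv {G H : Type*} [Group G] [Group H] (R : Subgroup G) (S : Subgroup H)
    (α : S ≃* R) : Set G :=
  {g | g ∈ Subgroup.normalizer (R : Set G) ∧ ∃ h ∈ Subgroup.normalizer (S : Set H),
    ∀ s t : S, (t : H) = h * (s : H) * h⁻¹ → (α t : G) = g * (α s : G) * g⁻¹}

/-!
For a twisted diagonal subgroup `D ≤ G × H` over `R` put `d(D) = |X^D| - |Y^D|`. Taking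
`Δ(R)`-fixed points in the orthogonality isomorphism gives `∑_D d(D)² = |H| · |C_G(R)|`: for
bifree `U`, `V` every `Δ(R)`-fixed point of `U ×_H V°` lifts to exactly `|H|` pairs `(u, v)`, and
each such pair is fixed by exactly one twisted diagonal over `R`, so that
`|(U ×_H V°)^Δ(R)| · |H| = ∑_D |U^D| · |V^D|`.

Both `C_G(R)` and `C_H(S)` (for `S = p₂(D)`) act freely on `X^D` and `Y^D`, hence divide `d(D)`.
Since `d` is constant on `(1 × H)`-conjugacy classes and the class of `D` has `|H| / |C_H(S)|`
members, a class with `d ≠ 0` already contributes at least `|H| · |C_G(R)|` to the sum. So it is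
the only such class, and `|d(D)| = |C_G(R)| = |C_H(S)|`. Finally, for `g ∈ N_G(R)` the conjugate
of `Δ(R, α, S)` by `(g, 1)` has the same `d`, so it is also a conjugate by some `(1, h)`, and
this `h` is what `g ∈ N_{α⁻¹}` asks for.
-/

open Subgroup

section GroupAction

variable {M X Y : Type*} [Group M] [MulAction M X] [MulAction M Y]

theorem mem_fixedPoints_subgroup_iff {K : Subgroup M} {x : X} :
    x ∈ fixedPoints K X ↔ ∀ m ∈ K, m • x = x :=
  ⟨fun h m hm => h ⟨m, hm⟩, fun h k => h k k.2⟩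

theorem card_dvd_card_of_free (hfree : ∀ (m : M) (x : X), m • x = x → m = 1) :
    Nat.card M ∣ Nat.card X := by
  have e := selfEquivOrbitsQuotientProd fun x => (eq_bot_iff_forall _).2 fun m hm => hfree m x hm
  exact ⟨_, (Nat.card_congr e).trans ((Nat.card_prod _ _).trans (mul_comm _ _))⟩

theorem card_dvd_card_fixedPoints_of_free {C K : Subgroup M} (hCK : C ≤ centralizer (K : Set M))
    (hfree : ∀ c ∈ C, ∀ x : X, c • x = x → c = 1) :
    Nat.card C ∣ Nat.card (fixedPoints K X) := by
  let F : SubMulAction C X :=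
    { carrier := fixedPoints K X
      smul_mem' := fun c x hx => mem_fixedPoints_subgroup_iff.2 fun k hk => by
        rw [Subgroup.smul_def, smul_smul, mem_centralizer_iff.1 (hCK c.2) k hk, mul_smul,
          mem_fixedPoints_subgroup_iff.1 hx k hk] }
  exact card_dvd_card_of_free (X := F) fun c x hcx =>
    Subtype.ext (hfree c c.2 x (congrArg Subtype.val hcx))

theorem card_fixedPoints_map_conj (z : M) (K : Subgroup M) :
    Nat.card (fixedPoints (K.map (MulAut.conj z).toMonoidHom) X) = Nat.card (fixedPoints K X) :=
  Nat.card_congr <| .symm <| (MulAction.toPerm z).subtypeEquiv fun x => by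
    rw [mem_fixedPoints_subgroup_iff, mem_fixedPoints_subgroup_iff]
    simp [mul_smul]

theorem card_fixedPoints_congr (e : X ≃ Y) (he : ∀ (m : M) (x : X), e (m • x) = m • e x)
    (K : Subgroup M) : Nat.card (fixedPoints K X) = Nat.card (fixedPoints K Y) :=
  Nat.card_congr <| e.subtypeEquiv fun x => by
    simp only [mem_fixedPoints_subgroup_iff, ← he, e.injective.eq_iff]

theorem card_fixedPoints_sum [Finite X] [Finite Y] (K : Subgroup M) :
    Nat.card (fixedPoints K (X ⊕ Y)) =
      Nat.card (fixedPoints K X) + Nat.card (fixedPoints K Y) := by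
  rw [← Nat.card_sum]
  refine Nat.card_congr <| Equiv.subtypeSum.trans <| Equiv.sumCongr
    (Equiv.subtypeEquivRight fun x => ?_) (Equiv.subtypeEquivRight fun y => ?_) <;>
  simp [mem_fixedPoints]

theorem card_fixedPoints_prod (K : Subgroup M) :
    Nat.card (fixedPoints K (X × Y)) =
      Nat.card (fixedPoints K X) * Nat.card (fixedPoints K Y) := by
  rw [← Nat.card_prod]
  refine Nat.card_congr <| (Equiv.subtypeEquivRight fun w => ?_).trans Equiv.subtypeProdEquivProd
  simp [mem_fixedPoints, Prod.ext_iff, forall_and]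

end GroupAction

theorem Nat.card_preimage_eq_card_mul {α β : Type*} [Finite α] (f : α → β) (s : Set β)
    [Finite s] {n : ℕ} (hn : ∀ b ∈ s, Nat.card {a // f a = b} = n) :
    Nat.card (f ⁻¹' s) = Nat.card s * n := by
  have := Fintype.ofFinite s
  rw [← Nat.card_congr (Equiv.sigmaSubtypeFiberEquivSubtype f (p := (· ∈ f ⁻¹' s)) (q := (· ∈ s))
      fun _ => Iff.rfl),
    Nat.card_sigma, Finset.sum_congr rfl fun b _ => hn b.1 b.2, Finset.sum_const, Finset.card_univ,
    smul_eq_mul, Nat.card_eq_fintype_card]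

noncomputable def markDiff {M : Type*} [Group M] (X Y : Type*) [MulAction M X] [MulAction M Y]
    (K : Subgroup M) : ℤ :=
  Nat.card (fixedPoints K X) - Nat.card (fixedPoints K Y)

theorem markDiff_map_conj {M : Type*} [Group M] {X Y : Type*} [MulAction M X] [MulAction M Y]
    (z : M) (K : Subgroup M) :
    markDiff X Y (K.map (MulAut.conj z).toMonoidHom) = markDiff X Y K := by
  simp only [markDiff, card_fixedPoints_map_conj]

theorem markDiff_ne_zero_iff {M X Y : Type*} [Group M] [MulAction M X] [MulAction M Y]
    {K : Subgroup M} :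
    markDiff X Y K ≠ 0 ↔ Nat.card (fixedPoints K X) ≠ Nat.card (fixedPoints K Y) :=
  sub_ne_zero.trans Nat.cast_inj.not

theorem natCast_dvd_markDiff {M X Y : Type*} [Group M] [MulAction M X] [MulAction M Y]
    {K : Subgroup M} {n : ℕ} (hX : n ∣ Nat.card (fixedPoints K X))
    (hY : n ∣ Nat.card (fixedPoints K Y)) : (n : ℤ) ∣ markDiff X Y K :=
  dvd_sub (Int.natCast_dvd_natCast.2 hX) (Int.natCast_dvd_natCast.2 hY)

theorem MulAction.orbit_and_natAbs_of_sum_sq_eq_card_mul {H T : Type*} [Group H]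
    [MulAction H T] [Fintype T] {d : T → ℤ} (hd : ∀ (h : H) (t : T), d (h • t) = d t) {a : ℕ}
    (hsum : ∑ t, d t ^ 2 = Nat.card H * a) {t₀ : T} (ht₀ : d t₀ ≠ 0) (ha : (a : ℤ) ∣ d t₀)
    (hb : (Nat.card (stabilizer H t₀) : ℤ) ∣ d t₀) :
    (∀ t, d t ≠ 0 → t ∈ orbit H t₀) ∧ (d t₀).natAbs = a ∧
      (d t₀).natAbs = Nat.card (stabilizer H t₀) := by
  classical
  set O := (orbit H t₀).toFinset
  set b := Nat.card (stabilizer H t₀)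
  set e := (d t₀).natAbs
  have he : 0 < e := Int.natAbs_pos.2 ht₀
  have hae : a ≤ e := Nat.le_of_dvd he (Int.natCast_dvd.1 ha)
  have hbe : b ≤ e := Nat.le_of_dvd he (Int.natCast_dvd.1 hb)
  have hOb : O.card * b = Nat.card H := by
    rw [Set.toFinset_card, ← Nat.card_eq_fintype_card, ← Nat.card_prod]
    exact Nat.card_congr (orbitProdStabilizerEquivGroup H t₀)
  have hO : 0 < O.card := Finset.card_pos.2 ⟨t₀, Set.mem_toFinset.2 (mem_orbit_self t₀)⟩
  have hsumO : ∑ t ∈ O, d t ^ 2 = O.card * e ^ 2 := by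
    rw [Finset.sum_congr rfl fun t ht => ?_, Finset.sum_const, nsmul_eq_mul, Int.natAbs_sq]
    obtain ⟨h, rfl⟩ := mem_orbit_iff.1 (Set.mem_toFinset.1 ht)
    rw [hd h t₀]
  have hrest : 0 ≤ ∑ t ∈ Oᶜ, d t ^ 2 := Finset.sum_nonneg fun _ _ => sq_nonneg _
  have htot := Finset.sum_add_sum_compl O fun t => d t ^ 2
  rw [hsumO, hsum, ← hOb] at htot
  have hab : a * b ≤ e * e := Nat.mul_le_mul hae hbe
  have hrest0 : ∑ t ∈ Oᶜ, d t ^ 2 = 0 := by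
    have : (O.card : ℤ) * (a * b) ≤ O.card * (e * e) := by gcongr
    push_cast at htot
    nlinarith
  have hee : e * e = a * b := by
    rw [hrest0, add_zero] at htot
    have : (O.card : ℤ) * (e * e) = O.card * (a * b) := by
      push_cast at htot
      linear_combination htot
    exact_mod_cast mul_left_cancel₀ (by exact_mod_cast hO.ne') this
  refine ⟨fun t ht => ?_, ?_, ?_⟩
  · by_contra hto
    have := (Finset.sum_eq_zero_iff_of_nonneg fun _ _ => sq_nonneg _).1 hrest0 t
      (Finset.mem_compl.2 fun h => hto (Set.mem_toFinset.1 h))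
    exact ht (pow_eq_zero_iff two_ne_zero |>.1 this)
  · exact le_antisymm
      (Nat.le_of_mul_le_mul_right (hee.trans_le (Nat.mul_le_mul_left a hbe)) he) hae
  · exact le_antisymm (Nat.le_of_mul_le_mul_right
      ((hee.trans (mul_comm a b)).trans_le (Nat.mul_le_mul_left b hae)) he) hbe

section TwistedDiagonal

variable {G H : Type*} [Group G] [Group H]

structure IsTwistedDiagonalOver (R : Subgroup G) (D : Subgroup (G × H)) : Prop where
  map_fst_eq : D.map (MonoidHom.fst G H) = R
  snd_eq_one : ∀ p ∈ D, p.1 = 1 → p.2 = 1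
  fst_eq_one : ∀ p ∈ D, p.2 = 1 → p.1 = 1

variable {R : Subgroup G} {S : Subgroup H} (α : S ≃* R)

theorem mem_twistedDiagonal_iff {p : G × H} :
    p ∈ twistedDiagonal R S α ↔ ∃ s : S, ((α s : G), (s : H)) = p :=
  Iff.rfl

theorem map_snd_twistedDiagonal : (twistedDiagonal R S α).map (MonoidHom.snd G H) = S := by
  ext h
  simp only [mem_map, mem_twistedDiagonal_iff]
  exact ⟨fun ⟨_, ⟨s, hs⟩, hp⟩ => hp ▸ hs ▸ s.2, fun hh => ⟨_, ⟨⟨h, hh⟩, rfl⟩, rfl⟩⟩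

theorem isTwistedDiagonalOver_twistedDiagonal :
    IsTwistedDiagonalOver R (twistedDiagonal R S α) where
  map_fst_eq := by
    ext g
    simp only [mem_map, mem_twistedDiagonal_iff]
    exact ⟨fun ⟨_, ⟨s, hs⟩, hp⟩ => hp ▸ hs ▸ (α s).2,
      fun hg => ⟨_, ⟨α.symm ⟨g, hg⟩, rfl⟩, by simp⟩⟩
  snd_eq_one := by
    rintro _ ⟨s, rfl⟩ (hs : (α s : G) = 1)
    simpa using hs
  fst_eq_one := by
    rintro _ ⟨s, rfl⟩ (hs : (s : H) = 1)
    simp [show s = 1 from Subtype.ext hs]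

namespace IsTwistedDiagonalOver

variable {D D' : Subgroup (G × H)} (hD : IsTwistedDiagonalOver R D)
include hD

theorem fst_mem {p : G × H} (hp : p ∈ D) : p.1 ∈ R :=
  hD.map_fst_eq ▸ ⟨p, hp, rfl⟩

theorem exists_mem {g : G} (hg : g ∈ R) : ∃ h : H, (g, h) ∈ D := by
  rw [← hD.map_fst_eq] at hg
  obtain ⟨p, hp, rfl⟩ := hg
  exact ⟨p.2, hp⟩

theorem snd_eq_of_mem {g : G} {h h' : H} (h₁ : (g, h) ∈ D) (h₂ : (g, h') ∈ D) : h = h' :=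
  mul_inv_eq_one.1 <| hD.snd_eq_one _ (mul_mem h₁ (inv_mem h₂)) (mul_inv_cancel g)

theorem eq_of_le (hD' : IsTwistedDiagonalOver R D') (hle : D ≤ D') : D = D' := by
  refine le_antisymm hle fun p hp => ?_
  obtain ⟨h, hh⟩ := hD.exists_mem (hD'.fst_mem hp)
  rwa [hD'.snd_eq_of_mem (hle hh) hp] at hh

theorem exists_eq_twistedDiagonal :
    ∃ (S : Subgroup H) (α : S ≃* R), twistedDiagonal R S α = D := by
  let eS := MonoidHom.ofInjective
    ((injective_iff_map_eq_one ((MonoidHom.snd G H).domRestrict D)).2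
      fun p hp => Subtype.ext (Prod.ext (hD.fst_eq_one p p.2 hp) hp))
  let eR := MonoidHom.ofInjective
    ((injective_iff_map_eq_one ((MonoidHom.fst G H).domRestrict D)).2
      fun p hp => Subtype.ext (Prod.ext hp (hD.snd_eq_one p p.2 hp)))
  refine ⟨_, eS.symm.trans (eR.trans (MulEquiv.subgroupCongr ?_)), ?_⟩
  · rw [MonoidHom.domRestrict_range, hD.map_fst_eq]
  · ext p
    constructor
    · rintro ⟨s, rfl⟩
      obtain ⟨d, rfl⟩ := eS.surjective s
      simp [eS, eR, MonoidHom.ofInjective_apply]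
    · intro hp
      exact ⟨eS ⟨p, hp⟩, by simp [eS, eR, MonoidHom.ofInjective_apply]⟩

theorem map_conj {g : G} (hg : g ∈ normalizer (R : Set G)) (h : H) :
    IsTwistedDiagonalOver R (D.map (MulAut.conj (g, h)).toMonoidHom) where
  map_fst_eq := by
    rw [map_map, show (MonoidHom.fst G H).comp (MulAut.conj (g, h)).toMonoidHom =
      (MulAut.conj g : G →* G).comp (MonoidHom.fst G H) from MonoidHom.ext fun _ => rfl,
      ← map_map, hD.map_fst_eq, mem_normalizer_iff_map_conj_eq.1 hg]
  snd_eq_one := by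
    rintro _ ⟨p, hp, rfl⟩ h1
    simp_all [hD.snd_eq_one p hp]
  fst_eq_one := by
    rintro _ ⟨p, hp, rfl⟩ h1
    simp_all [hD.fst_eq_one p hp]

end IsTwistedDiagonalOver

end TwistedDiagonal

theorem mem_nsetAlphaInv_of_map_conj_eq {G H : Type*} [Group G] [Group H] {R : Subgroup G}
    {S : Subgroup H} {α : S ≃* R} {g : G} (hg : g ∈ normalizer (R : Set G)) {h : H}
    (hh : (twistedDiagonal R S α).map (MulAut.conj ((1 : G), h)).toMonoidHom =
      (twistedDiagonal R S α).map (MulAut.conj (g, (1 : H))).toMonoidHom) :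
    g ∈ NsetAlphaInv R S α := by
  have hmem (p : G × H) : (∃ s : S, ((α s : G), h * s * h⁻¹) = p) ↔
      ∃ s : S, (g * α s * g⁻¹, (s : H)) = p := by
    simpa only [mem_map, mem_twistedDiagonal_iff, exists_exists_eq_and, MulEquiv.coe_toMonoidHom,
      MulAut.conj_apply, Prod.mk_mul_mk, Prod.inv_mk, mul_one, one_mul, inv_one] using
      SetLike.ext_iff.1 hh p
  have hA (s : S) : ∃ s' : S, (α s' : G) = g * α s * g⁻¹ ∧ h * s' * h⁻¹ = s := by
    obtain ⟨s', hs'⟩ := (hmem _).2 ⟨s, rfl⟩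
    exact ⟨s', Prod.ext_iff.1 hs'⟩
  have hB (s : S) : ∃ s' : S, h * s * h⁻¹ = s' := by
    obtain ⟨s', hs'⟩ := (hmem _).1 ⟨s, rfl⟩
    exact ⟨s', (congrArg Prod.snd hs').symm⟩
  refine ⟨hg, h⁻¹, mem_normalizer_iff.2 fun x => ⟨fun hx => ?_, fun hx => ?_⟩, fun s t hts => ?_⟩
  · obtain ⟨s', -, hs'⟩ := hA ⟨x, hx⟩
    rw [← show h * s' * h⁻¹ = x from hs']
    simp [mul_assoc]
  · obtain ⟨s', hs'⟩ := hB ⟨_, hx⟩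
    rw [show x = s' by rw [← hs']; group]
    exact s'.2
  · obtain ⟨s', hα, hs'⟩ := hA s
    rw [show t = s' from Subtype.ext (by rw [hts, ← hs']; group), hα]

@[simp]
theorem MulAut.conj_one_mk_apply {G H : Type*} [Group G] [Group H] (h : H) (p : G × H) :
    (MulAut.conj ((1 : G), h)).toMonoidHom p = (p.1, h * p.2 * h⁻¹) := by
  simp [Prod.ext_iff]

abbrev TwistedDiagonalOver {G : Type*} [Group G] (R : Subgroup G) (H : Type*) [Group H] :
    Type _ :=
  {D : Subgroup (G × H) // IsTwistedDiagonalOver R D}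

namespace TwistedDiagonalOver

variable {G H : Type*} [Group G] [Group H] {R : Subgroup G}

noncomputable instance [Finite G] [Finite H] : Fintype (TwistedDiagonalOver R H) :=
  Fintype.ofFinite _

instance : SMul H (TwistedDiagonalOver R H) :=
  ⟨fun h D => ⟨D.1.map (MulAut.conj ((1 : G), h)).toMonoidHom, D.2.map_conj (one_mem _) h⟩⟩

theorem coe_smul (h : H) (D : TwistedDiagonalOver R H) :
    (h • D).1 = D.1.map (MulAut.conj ((1 : G), h)).toMonoidHom :=
  rfl

instance : MulAction H (TwistedDiagonalOver R H) where
  one_smul D := Subtype.ext <| by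
    rw [coe_smul, Prod.mk_one_one, map_one]
    exact map_id _
  mul_smul h h' D := Subtype.ext <| by
    rw [coe_smul, coe_smul, coe_smul, map_map]
    congr 1
    ext p <;> simp [mul_assoc]

theorem stabilizer_eq_centralizer (D : TwistedDiagonalOver R H) :
    stabilizer H D = centralizer (D.1.map (MonoidHom.snd G H) : Set H) := by
  ext h
  rw [mem_stabilizer_iff, mem_centralizer_iff]
  constructor
  · rintro hD _ ⟨p, hp, rfl⟩
    have hp' : (p.1, h * p.2 * h⁻¹) ∈ D.1 := by
      rw [← hD, coe_smul]
      exact ⟨p, hp, MulAut.conj_one_mk_apply h p⟩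
    have := D.2.snd_eq_of_mem hp' hp
    simp_all [mul_inv_eq_iff_eq_mul]
  · intro hc
    have hfix : ∀ p ∈ D.1, (p.1, h * p.2 * h⁻¹) = p := fun p hp => by
      rw [← hc p.2 ⟨p, hp, rfl⟩, mul_inv_cancel_right]
    refine Subtype.ext (le_antisymm ?_ fun p hp =>
      ⟨p, hp, by rw [MulAut.conj_one_mk_apply, hfix p hp]⟩)
    rintro _ ⟨p, hp, rfl⟩
    rwa [MulAut.conj_one_mk_apply, hfix p hp]

end TwistedDiagonalOver

section Bifree

variable {G H W : Type*} [Group G] [Group H] [MulAction (G × H) W] {R : Subgroup G}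

theorem IsBifree.prod {V : Type*} [MulAction (G × H) V] (hW : IsBifree G H W) :
    IsBifree G H (W × V) :=
  ⟨fun g w hw => hW.1 g w.1 (congrArg Prod.fst hw),
    fun h w hw => hW.2 h w.1 (congrArg Prod.fst hw)⟩

theorem isTwistedDiagonalOver_prod_top_inf_stabilizer (hW : IsBifree G H W) {w : W}
    (hw : ∀ r ∈ R, ∃ h : H, ((r, h) : G × H) • w = w) :
    IsTwistedDiagonalOver R (R.prod ⊤ ⊓ stabilizer (G × H) w) where
  map_fst_eq := by
    refine le_antisymm (fun _ ⟨p, hp, e⟩ => e ▸ (mem_prod.1 hp.1).1) fun g hg => ?_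
    obtain ⟨h, hh⟩ := hw g hg
    exact ⟨(g, h), ⟨mem_prod.2 ⟨hg, mem_top h⟩, hh⟩, rfl⟩
  snd_eq_one p hp h1 := hW.2 p.2 w (by rw [← h1]; exact hp.2)
  fst_eq_one p hp h2 := hW.1 p.1 w (by rw [← h2]; exact hp.2)

theorem IsTwistedDiagonalOver.eq_prod_top_inf_stabilizer (hW : IsBifree G H W)
    {D : Subgroup (G × H)} (hD : IsTwistedDiagonalOver R D) {w : W}
    (hw : w ∈ fixedPoints D W) :
    D = R.prod ⊤ ⊓ stabilizer (G × H) w := by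
  refine hD.eq_of_le (isTwistedDiagonalOver_prod_top_inf_stabilizer hW fun r hr => ?_)
    fun p hp => ⟨mem_prod.2 ⟨hD.fst_mem hp, mem_top _⟩, hw ⟨p, hp⟩⟩
  obtain ⟨h, hh⟩ := hD.exists_mem hr
  exact ⟨h, hw ⟨_, hh⟩⟩

theorem sum_card_fixedPoints_twistedDiagonalOver [Finite G] [Finite H] [Finite W]
    (hW : IsBifree G H W) :
    ∑ D : TwistedDiagonalOver R H, Nat.card (fixedPoints D.1 W) =
      Nat.card {w : W // ∀ r ∈ R, ∃ h : H, ((r, h) : G × H) • w = w} := by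
  rw [← Nat.card_sigma]
  refine Nat.card_congr (Equiv.ofBijective (fun x => ⟨x.2, fun r hr => ?_⟩) ⟨?_, ?_⟩)
  · obtain ⟨h, hh⟩ := x.1.2.exists_mem hr
    exact ⟨h, x.2.2 ⟨_, hh⟩⟩
  · rintro ⟨D, w, hw⟩ ⟨D', w', hw'⟩ he
    obtain rfl : w = w' := congrArg Subtype.val he
    exact Sigma.subtype_ext (Subtype.ext ((D.2.eq_prod_top_inf_stabilizer hW hw).trans
      (D'.2.eq_prod_top_inf_stabilizer hW hw').symm)) rfl
  · rintro ⟨w, hw⟩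
    exact ⟨⟨⟨_, isTwistedDiagonalOver_prod_top_inf_stabilizer hW hw⟩, w, fun p => p.2.2⟩, rfl⟩

theorem card_centralizer_map_fst_dvd_card_fixedPoints
    (hW : ∀ (g : G) (w : W), (g, (1 : H)) • w = w → g = 1) (D : Subgroup (G × H)) :
    Nat.card (centralizer (D.map (MonoidHom.fst G H) : Set G)) ∣ Nat.card (fixedPoints D W) := by
  rw [← card_map_of_injective (f := MonoidHom.inl G H) fun _ _ => congrArg Prod.fst]
  refine card_dvd_card_fixedPoints_of_free ?_ ?_
  · rintro _ ⟨c, hc, rfl⟩ p hp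
    simp [Prod.ext_iff, mem_centralizer_iff.1 hc p.1 ⟨p, hp, rfl⟩]
  · rintro _ ⟨c, -, rfl⟩ w hw
    simp [hW c w hw]

theorem card_centralizer_map_snd_dvd_card_fixedPoints
    (hW : ∀ (h : H) (w : W), ((1 : G), h) • w = w → h = 1) (D : Subgroup (G × H)) :
    Nat.card (centralizer (D.map (MonoidHom.snd G H) : Set H)) ∣ Nat.card (fixedPoints D W) := by
  rw [← card_map_of_injective (f := MonoidHom.inr G H) fun _ _ => congrArg Prod.snd]
  refine card_dvd_card_fixedPoints_of_free ?_ ?_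
  · rintro _ ⟨c, hc, rfl⟩ p hp
    simp [Prod.ext_iff, mem_centralizer_iff.1 hc p.2 ⟨p, hp, rfl⟩]
  · rintro _ ⟨c, -, rfl⟩ w hw
    simp [hW c w hw]

end Bifree

section Tensor

variable {G H U V : Type*} [Group G] [Group H] [MulAction (G × H) U] [MulAction (G × H) V]

def BisetTensor.mkOp (w : U × V) : BisetTensor G H G U (BisetOp H G V) :=
  BisetTensor.mk w

namespace BisetTensor

instance {K X Y : Type*} [Group K] [MulAction (G × H) X] [MulAction (H × K) Y] [Finite X]
    [Finite Y] : Finite (BisetTensor G H K X Y) :=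
  Quotient.finite _

theorem mkOp_surjective :
    Function.Surjective (mkOp : U × V → BisetTensor G H G U (BisetOp H G V)) :=
  Quotient.mk_surjective

theorem mkOp_eq_mkOp_iff {w w' : U × V} :
    (mkOp w : BisetTensor G H G U (BisetOp H G V)) = mkOp w' ↔ ∃ h : H, w' = ((1 : G), h) • w :=
  Quotient.eq.trans <| exists_congr fun h =>
    (Prod.ext_iff (x := w') (y := ((1 : G), h) • w)).symm

theorem mkOp_mem_fixedPoints_diagSubgroup_iff {R : Subgroup G} {w : U × V} :
    (mkOp w : BisetTensor G H G U (BisetOp H G V)) ∈ fixedPoints (diagSubgroup R) _ ↔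
      ∀ r ∈ R, ∃ h : H, ((r, h) : G × H) • w = w := by
  have hsmul (r : G) (h : H) : ((1 : G), h) • ((r, 1) : G × H) • w = ((r, h) : G × H) • w := by
    rw [smul_smul, Prod.mk_mul_mk, one_mul, mul_one]
  rw [mem_fixedPoints_subgroup_iff]
  refine ⟨fun hw r hr => ?_, ?_⟩
  · obtain ⟨h, hh⟩ := mkOp_eq_mkOp_iff.1 (hw _ ⟨⟨r, hr⟩, rfl⟩)
    exact ⟨h, (hsmul r h).symm.trans hh.symm⟩
  · rintro hw _ ⟨⟨r, hr⟩, rfl⟩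
    obtain ⟨h, hh⟩ := hw r hr
    exact mkOp_eq_mkOp_iff.2 ⟨h, ((hsmul r h).trans hh).symm⟩

theorem card_fiber_mkOp (hU : ∀ (h : H) (u : U), ((1 : G), h) • u = u → h = 1) (w : U × V) :
    Nat.card {w' // (mkOp w' : BisetTensor G H G U (BisetOp H G V)) = mkOp w} = Nat.card H := by
  refine (Nat.card_congr (Equiv.ofBijective
    (fun h => ⟨((1 : G), h) • w, (mkOp_eq_mkOp_iff.2 ⟨h, rfl⟩).symm⟩) ⟨?_, ?_⟩)).symm
  · intro h h' he
    have hfix : ((1 : G), h'⁻¹ * h) • w.1 = w.1 := by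
      simpa [smul_smul, Prod.mk_one_one] using
        congrArg (fun x => ((1 : G), h')⁻¹ • x.1.1) he
    exact (inv_mul_eq_one.1 (hU _ _ hfix)).symm
  · rintro ⟨w', hw'⟩
    obtain ⟨h, rfl⟩ := mkOp_eq_mkOp_iff.1 hw'.symm
    exact ⟨h, rfl⟩

theorem card_fixedPoints_diagSubgroup_mul_card [Finite G] [Finite H] [Finite U] [Finite V]
    (hU : IsBifree G H U) (R : Subgroup G) :
    Nat.card (fixedPoints (diagSubgroup R) (BisetTensor G H G U (BisetOp H G V))) * Nat.card H =
      ∑ D : TwistedDiagonalOver R H,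
        Nat.card (fixedPoints D.1 U) * Nat.card (fixedPoints D.1 V) := by
  rw [← Nat.card_preimage_eq_card_mul mkOp _ fun t _ => ?_]
  · simp_rw [← card_fixedPoints_prod]
    rw [sum_card_fixedPoints_twistedDiagonalOver hU.prod]
    exact Nat.card_congr (Equiv.subtypeEquivRight fun w => mkOp_mem_fixedPoints_diagSubgroup_iff)
  · obtain ⟨w, rfl⟩ := mkOp_surjective t
    exact card_fiber_mkOp hU.2 w

end BisetTensor

end Tensor

theorem BisetGrp.card_fixedPoints_diagSubgroup {G : Type*} [Group G] (R : Subgroup G) :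
    Nat.card (fixedPoints (diagSubgroup R) (BisetGrp G)) = Nat.card (centralizer (R : Set G)) := by
  refine Nat.card_congr <| Equiv.subtypeEquiv
    ⟨BisetGrp.val, BisetGrp.mk, fun _ => rfl, fun _ => rfl⟩ fun x => ?_
  rw [mem_fixedPoints_subgroup_iff, mem_centralizer_iff]
  constructor
  · intro hx r hr
    exact mul_inv_eq_iff_eq_mul.1 (congrArg BisetGrp.val (hx _ ⟨⟨r, hr⟩, rfl⟩))
  · rintro hx _ ⟨⟨r, hr⟩, rfl⟩
    change (⟨r * x.val * r⁻¹⟩ : BisetGrp G) = x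
    rw [show r * x.val = x.val * r from hx r hr, mul_inv_cancel_right]

namespace IsOrthogonalPair

variable {G H X Y : Type*} [Group G] [Group H] [Finite G] [Finite H]
  [MulAction (G × H) X] [MulAction (G × H) Y] [Finite X] [Finite Y]

theorem sum_markDiff_sq (hX : IsBifree G H X) (hY : IsBifree G H Y)
    (horth : IsOrthogonalPair G H X Y) (R : Subgroup G) :
    ∑ D : TwistedDiagonalOver R H, markDiff X Y D.1 ^ 2 =
      Nat.card H * Nat.card (centralizer (R : Set G)) := by
  obtain ⟨e, he⟩ := horth
  have hcard := congrArg (· * Nat.card H) (card_fixedPoints_congr e he (diagSubgroup R))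
  simp only [card_fixedPoints_sum, BisetGrp.card_fixedPoints_diagSubgroup, add_mul,
    BisetTensor.card_fixedPoints_diagSubgroup_mul_card hX,
    BisetTensor.card_fixedPoints_diagSubgroup_mul_card hY] at hcard
  have hsq (D : TwistedDiagonalOver R H) : markDiff X Y D.1 ^ 2 =
      ((Nat.card (fixedPoints D.1 X) * Nat.card (fixedPoints D.1 X) +
        Nat.card (fixedPoints D.1 Y) * Nat.card (fixedPoints D.1 Y) : ℕ) : ℤ) -
      ((Nat.card (fixedPoints D.1 X) * Nat.card (fixedPoints D.1 Y) +
        Nat.card (fixedPoints D.1 Y) * Nat.card (fixedPoints D.1 X) : ℕ) : ℤ) := by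
    push_cast [markDiff]
    ring
  rw [Finset.sum_congr rfl fun D _ => hsq D, Finset.sum_sub_distrib, ← Nat.cast_sum,
    ← Nat.cast_sum, Finset.sum_add_distrib, Finset.sum_add_distrib, hcard]
  push_cast
  ring

theorem exists_markDiff_ne_zero (hX : IsBifree G H X) (hY : IsBifree G H Y)
    (horth : IsOrthogonalPair G H X Y) (R : Subgroup G) :
    ∃ D : TwistedDiagonalOver R H, markDiff X Y D.1 ≠ 0 := by
  by_contra! h
  have := horth.sum_markDiff_sq hX hY R
  rw [Finset.sum_eq_zero fun D _ => by rw [h D, zero_pow two_ne_zero]] at this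
  exact (Nat.mul_pos Nat.card_pos Nat.card_pos).ne' (by exact_mod_cast this.symm)

theorem orbit_and_natAbs_markDiff (hX : IsBifree G H X) (hY : IsBifree G H Y)
    (horth : IsOrthogonalPair G H X Y) {R : Subgroup G} {D : TwistedDiagonalOver R H}
    (hD : markDiff X Y D.1 ≠ 0) :
    (∀ D' : TwistedDiagonalOver R H, markDiff X Y D'.1 ≠ 0 → D' ∈ orbit H D) ∧
      (markDiff X Y D.1).natAbs = Nat.card (centralizer (R : Set G)) ∧
      (markDiff X Y D.1).natAbs =
        Nat.card (centralizer (D.1.map (MonoidHom.snd G H) : Set H)) := by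
  have hfst := natCast_dvd_markDiff (card_centralizer_map_fst_dvd_card_fixedPoints hX.1 D.1)
    (card_centralizer_map_fst_dvd_card_fixedPoints hY.1 D.1)
  have hsnd := natCast_dvd_markDiff (card_centralizer_map_snd_dvd_card_fixedPoints hX.2 D.1)
    (card_centralizer_map_snd_dvd_card_fixedPoints hY.2 D.1)
  rw [D.2.map_fst_eq] at hfst
  rw [← TwistedDiagonalOver.stabilizer_eq_centralizer] at hsnd ⊢
  exact orbit_and_natAbs_of_sum_sq_eq_card_mul (fun h D => markDiff_map_conj _ D.1)
    (horth.sum_markDiff_sq hX hY R) hD hfst hsnd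

end IsOrthogonalPair

/-- for an orthogonal pair `(X,Y)` and each `R ≤ G` there is a twisted diagonal
subgroup `Δ(R,α,S)` on which the marks of `X` and `Y` differ; it is unique up to
`(1×H)`-conjugacy; and for any such subgroup the difference of marks has absolute value
`|C_G(R)| = |C_H(S)|`, and `N_{α⁻¹} = N_G(R)`. -/
theorem statement11 {G H : Type*} [Group G] [Group H] [Finite G] [Finite H]
    (X Y : Type*) [MulAction (G × H) X] [MulAction (G × H) Y] [Finite X] [Finite Y]
    (hX : IsBifree G H X) (hY : IsBifree G H Y) (horth : IsOrthogonalPair G H X Y)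
    (R : Subgroup G) :
    (∃ (S : Subgroup H) (α : S ≃* R),
        Nat.card (MulAction.fixedPoints (twistedDiagonal R S α) X) ≠
          Nat.card (MulAction.fixedPoints (twistedDiagonal R S α) Y)) ∧
    (∀ (S : Subgroup H) (α : S ≃* R) (S' : Subgroup H) (α' : S' ≃* R),
        Nat.card (MulAction.fixedPoints (twistedDiagonal R S α) X) ≠
          Nat.card (MulAction.fixedPoints (twistedDiagonal R S α) Y) →
        Nat.card (MulAction.fixedPoints (twistedDiagonal R S' α') X) ≠
          Nat.card (MulAction.fixedPoints (twistedDiagonal R S' α') Y) →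
        ∃ h : H, twistedDiagonal R S' α' =
          Subgroup.map (MulAut.conj ((1 : G), h)).toMonoidHom (twistedDiagonal R S α)) ∧
    (∀ (S : Subgroup H) (α : S ≃* R),
        Nat.card (MulAction.fixedPoints (twistedDiagonal R S α) X) ≠
          Nat.card (MulAction.fixedPoints (twistedDiagonal R S α) Y) →
        ((Nat.card (MulAction.fixedPoints (twistedDiagonal R S α) X) : ℤ) -
            (Nat.card (MulAction.fixedPoints (twistedDiagonal R S α) Y) : ℤ)).natAbs =
          Nat.card (Subgroup.centralizer (R : Set G)) ∧
        ((Nat.card (MulAction.fixedPoints (twistedDiagonal R S α) X) : ℤ) -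
            (Nat.card (MulAction.fixedPoints (twistedDiagonal R S α) Y) : ℤ)).natAbs =
          Nat.card (Subgroup.centralizer (S : Set H)) ∧
        NsetAlphaInv R S α = (Subgroup.normalizer (R : Set G) : Set G)) := by
  let Δ (S : Subgroup H) (α : S ≃* R) : TwistedDiagonalOver R H :=
    ⟨_, isTwistedDiagonalOver_twistedDiagonal α⟩
  have key {S : Subgroup H} {α : S ≃* R} := fun h =>
    horth.orbit_and_natAbs_markDiff hX hY (D := Δ S α) (markDiff_ne_zero_iff.2 h)
  refine ⟨?_, fun S α S' α' h₁ h₂ => ?_, fun S α h₁ => ?_⟩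
  · obtain ⟨D, hD⟩ := horth.exists_markDiff_ne_zero hX hY R
    obtain ⟨S, α, hSα⟩ := D.2.exists_eq_twistedDiagonal
    exact ⟨S, α, markDiff_ne_zero_iff.1 (hSα ▸ hD)⟩
  · obtain ⟨h, hh⟩ := (key h₁).1 (Δ S' α') (markDiff_ne_zero_iff.2 h₂)
    exact ⟨h, (congrArg Subtype.val hh).symm⟩
  · obtain ⟨huniq, hG, hH⟩ := key h₁
    refine ⟨hG, hH.trans (by rw [map_snd_twistedDiagonal]),
      Set.ext fun g => ⟨And.left, fun hg => ?_⟩⟩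
    obtain ⟨h, hh⟩ := huniq ⟨_, (isTwistedDiagonalOver_twistedDiagonal α).map_conj hg 1⟩
      ((markDiff_map_conj _ _).trans_ne (markDiff_ne_zero_iff.2 h₁))
    exact mem_nsetAlphaInv_of_map_conj_eq hg (congrArg Subtype.val hh)
end
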